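/- Let λ ≥ 0, let θ ∈ ℝ^d and let Σ be positive definite, and suppose θ − θ* ∈ λU_Σ. Then for every x ∈ ℝ^m and every k = 1,…,K one has min_{u ∈ U_Σ} g_k(x, θ* + 2λu) ≤ min_{u ∈ U_Σ} g_k(x, θ + λu) ≤ g_k(x, θ*). -/

import Mathlib

open MeasureTheory ProbabilityTheory Matrix
open scoped ENNReal Pointwise

/-- The ellipsoid `U_Σ = {u : uᵀ Σ⁻¹ u ≤ 1}`. -/
def USet {d : ℕ} (Sg : Matrix (Fin d) (Fin d) ℝ) : Set (Fin d → ℝ) :=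
  {u | u ⬝ᵥ (Sg⁻¹ *ᵥ u) ≤ 1}

/-- `r_k(x; Σ) = max_{u ∈ U_Σ} g_k(x, u)` where `g_k(x, θ) = θᵀ v_k(x)`. -/
noncomputable def rk {d m K : ℕ} (v : Fin K → (Fin m → ℝ) → (Fin d → ℝ))
    (k : Fin K) (x : Fin m → ℝ) (Sg : Matrix (Fin d) (Fin d) ℝ) : ℝ :=
  sSup ((fun u => u ⬝ᵥ v k x) '' USet Sg)

/-- `S(λ, Y; Σ)`, the set of parameter errors that are uniformly small over `Y`. -/
noncomputable def SErr {d m K : ℕ} (v : Fin K → (Fin m → ℝ) → (Fin d → ℝ))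
    (lam : ℝ) (Y : Set (Fin m → ℝ)) (Sg : Matrix (Fin d) (Fin d) ℝ) : Set (Fin d → ℝ) :=
  {Δ | ∀ k, ∀ y ∈ Y, |Δ ⬝ᵥ v k y| ≤ lam * rk v k y Sg}

/-- Feasibility for the robust optimization problem with scale `lam`, center `θ`, shape `Σ`. -/
def Feasible {d m K : ℕ} (X : Set (Fin m → ℝ)) (v : Fin K → (Fin m → ℝ) → (Fin d → ℝ))
    (lam : ℝ) (θ : Fin d → ℝ) (Sg : Matrix (Fin d) (Fin d) ℝ) (x : Fin m → ℝ) : Prop :=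
  x ∈ X ∧ ∀ k, ∀ u ∈ USet Sg, 0 ≤ (θ + lam • u) ⬝ᵥ v k x

/-- Optimal solution of the robust optimization problem. -/
def IsOptimal {d m K : ℕ} (X : Set (Fin m → ℝ)) (f : (Fin m → ℝ) → ℝ)
    (v : Fin K → (Fin m → ℝ) → (Fin d → ℝ))
    (lam : ℝ) (θ : Fin d → ℝ) (Sg : Matrix (Fin d) (Fin d) ℝ) (x : Fin m → ℝ) : Prop :=
  Feasible X v lam θ Sg x ∧ ∀ y, Feasible X v lam θ Sg y → f x ≤ f y

open Classical in
/-- The true objective `f*`, which is `∞` when a true constraint is violated. -/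
noncomputable def fStar {d m K : ℕ} (f : (Fin m → ℝ) → ℝ)
    (v : Fin K → (Fin m → ℝ) → (Fin d → ℝ)) (θs : Fin d → ℝ) (x : Fin m → ℝ) : EReal :=
  if ∀ k, 0 ≤ θs ⬝ᵥ v k x then (f x : EReal) else ⊤

/-- The standard Gaussian measure on `ℝ^d`. -/
noncomputable def stdGaussian (d : ℕ) : Measure (Fin d → ℝ) :=
  Measure.pi fun _ => gaussianReal 0 1

open Classical in
/-- The positive semidefinite square root (junk value `0` off the psd cone). -/
noncomputable def matSqrt {d : ℕ} (A : Matrix (Fin d) (Fin d) ℝ) : Matrix (Fin d) (Fin d) ℝ :=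
  if h : A.PosSemidef then
    h.1.eigenvectorUnitary.1 * diagonal (Real.sqrt ∘ h.1.eigenvalues) *
      (star h.1.eigenvectorUnitary : Matrix (Fin d) (Fin d) ℝ)
  else 0

/-- The centered Gaussian measure on `ℝ^d` with covariance `A`. -/
noncomputable def gaussOf {d : ℕ} (A : Matrix (Fin d) (Fin d) ℝ) : Measure (Fin d → ℝ) :=
  (stdGaussian d).map (fun z => matSqrt A *ᵥ z)

/-- The Euclidean norm on `Fin d → ℝ`. -/
noncomputable def euclNorm {d : ℕ} (z : Fin d → ℝ) : ℝ := Real.sqrt (∑ i, z i ^ 2)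

/-- Quantile function of the chi distribution with `d` degrees of freedom. -/
noncomputable def chiQuantile (d : ℕ) (p : ℝ) : ℝ :=
  sInf {t : ℝ | 0 ≤ t ∧ p ≤ (stdGaussian d {z | euclNorm z ≤ t}).toReal}

/-- The minimum spatial uniform bound `μ(p, Y; P, Σ)` (`⊤` when infeasible, `0` for `p ≤ 0`). -/
noncomputable def muB {d m K : ℕ} (v : Fin K → (Fin m → ℝ) → (Fin d → ℝ)) (p : ℝ)
    (Y : Set (Fin m → ℝ)) (P : Measure (Fin d → ℝ)) (Sg : Matrix (Fin d) (Fin d) ℝ) : ℝ≥0∞ :=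
  ⨅ (μ : ℝ) (_ : 0 ≤ μ ∧ ENNReal.ofReal p ≤ P (SErr v μ Y Sg)), ENNReal.ofReal μ

namespace Matrix

variable {n : Type*} [Fintype n] {M : Matrix n n ℝ}

lemma IsHermitian.dotProduct_mulVec_comm (hM : M.IsHermitian) (x y : n → ℝ) :
    x ⬝ᵥ (M *ᵥ y) = y ⬝ᵥ (M *ᵥ x) := by
  rw [dotProduct_mulVec, ← mulVec_transpose, dotProduct_comm,
    show Mᵀ = M by simpa using hM.eq]

lemma IsHermitian.dotProduct_mulVec_smul_add_smul (hM : M.IsHermitian) (a b : ℝ)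
    (x y : n → ℝ) :
    (a • x + b • y) ⬝ᵥ (M *ᵥ (a • x + b • y)) =
      a ^ 2 * (x ⬝ᵥ (M *ᵥ x)) + 2 * a * b * (x ⬝ᵥ (M *ᵥ y)) + b ^ 2 * (y ⬝ᵥ (M *ᵥ y)) := by
  simp only [mulVec_add, mulVec_smul, dotProduct_add, add_dotProduct, dotProduct_smul,
    smul_dotProduct, smul_eq_mul, hM.dotProduct_mulVec_comm y x]
  ring

lemma PosSemidef.dotProduct_mulVec_smul_add_smul_nonneg (hM : M.PosSemidef) (a b : ℝ)
    (x y : n → ℝ) :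
    0 ≤ a ^ 2 * (x ⬝ᵥ (M *ᵥ x)) + 2 * a * b * (x ⬝ᵥ (M *ᵥ y)) + b ^ 2 * (y ⬝ᵥ (M *ᵥ y)) := by
  simpa [hM.isHermitian.dotProduct_mulVec_smul_add_smul] using
    hM.dotProduct_mulVec_nonneg (a • x + b • y)

lemma PosSemidef.two_mul_abs_dotProduct_mulVec_le (hM : M.PosSemidef) (x y : n → ℝ) :
    2 * |x ⬝ᵥ (M *ᵥ y)| ≤ x ⬝ᵥ (M *ᵥ x) + y ⬝ᵥ (M *ᵥ y) := by
  have hadd := hM.dotProduct_mulVec_smul_add_smul_nonneg 1 1 x y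
  have hsub := hM.dotProduct_mulVec_smul_add_smul_nonneg 1 (-1) x y
  rw [← abs_two, ← abs_mul, abs_le]
  constructor <;> linarith

lemma PosSemidef.convexOn_dotProduct_mulVec (hM : M.PosSemidef) :
    ConvexOn ℝ Set.univ fun x : n → ℝ => x ⬝ᵥ (M *ᵥ x) := by
  refine ⟨convex_univ, fun x _ y _ a b ha hb hab => ?_⟩
  obtain rfl : b = 1 - a := by linarith
  have hdiff := hM.dotProduct_mulVec_smul_add_smul_nonneg 1 (-1) x y
  simp only [smul_eq_mul, hM.isHermitian.dotProduct_mulVec_smul_add_smul]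
  -- the convexity defect is `a (1 - a) (x - y)ᵀ M (x - y) ≥ 0`
  nlinarith [mul_nonneg (mul_nonneg ha hb) hdiff]

end Matrix

section Ellipsoid

variable {d : ℕ} {Sg : Matrix (Fin d) (Fin d) ℝ}

lemma zero_mem_USet : (0 : Fin d → ℝ) ∈ USet Sg := by
  simp [USet]

lemma neg_mem_USet {u : Fin d → ℝ} (hu : u ∈ USet Sg) : -u ∈ USet Sg := by
  simpa [USet, mulVec_neg] using hu

lemma convex_USet (hSg : Sg.PosDef) : Convex ℝ (USet Sg) := by
  simpa [USet] using hSg.inv.posSemidef.convexOn_dotProduct_mulVec.convex_le 1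

lemma abs_dotProduct_le_of_mem_USet (hSg : Sg.PosDef) {u : Fin d → ℝ} (hu : u ∈ USet Sg)
    (c : Fin d → ℝ) : |u ⬝ᵥ c| ≤ (1 + c ⬝ᵥ (Sg *ᵥ c)) / 2 := by
  have hc : Sg⁻¹ *ᵥ (Sg *ᵥ c) = c := by
    rw [mulVec_mulVec, nonsing_inv_mul Sg ((isUnit_iff_isUnit_det Sg).mp hSg.isUnit),
      one_mulVec]
  have h := hSg.inv.posSemidef.two_mul_abs_dotProduct_mulVec_le u (Sg *ᵥ c)
  rw [hc, dotProduct_comm (Sg *ᵥ c)] at h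
  have hu' : u ⬝ᵥ (Sg⁻¹ *ᵥ u) ≤ 1 := hu
  linarith

lemma bddBelow_image_add_smul_USet (hSg : Sg.PosDef) (a c : Fin d → ℝ) (t : ℝ) :
    BddBelow ((fun u => (a + t • u) ⬝ᵥ c) '' USet Sg) := by
  refine ⟨a ⬝ᵥ c - |t| * ((1 + c ⬝ᵥ (Sg *ᵥ c)) / 2), ?_⟩
  rintro _ ⟨u, hu, rfl⟩
  have hbound : |t * (u ⬝ᵥ c)| ≤ |t| * ((1 + c ⬝ᵥ (Sg *ᵥ c)) / 2) := by
    rw [abs_mul]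
    exact mul_le_mul_of_nonneg_left (abs_dotProduct_le_of_mem_USet hSg hu c) (abs_nonneg t)
  simp only [add_dotProduct, smul_dotProduct, smul_eq_mul]
  linarith [neg_abs_le (t * (u ⬝ᵥ c))]

end Ellipsoid

theorem stmt0_general {d m K : ℕ}
    (θstar : Fin d → ℝ) (v : Fin K → (Fin m → ℝ) → (Fin d → ℝ))
    (lam : ℝ) (θ : Fin d → ℝ)
    (Sg : Matrix (Fin d) (Fin d) ℝ) (hSg : Sg.PosDef)
    (hθ : θ - θstar ∈ lam • USet Sg) :
    ∀ x : Fin m → ℝ, ∀ k : Fin K,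
      sInf ((fun u => (θstar + (2 * lam) • u) ⬝ᵥ v k x) '' USet Sg) ≤
          sInf ((fun u => (θ + lam • u) ⬝ᵥ v k x) '' USet Sg) ∧
        sInf ((fun u => (θ + lam • u) ⬝ᵥ v k x) '' USet Sg) ≤ θstar ⬝ᵥ v k x := by
  intro x k
  obtain ⟨w, hw, hθw⟩ := hθ
  obtain rfl : θ = θstar + lam • w := by
    rw [show lam • w = θ - θstar from hθw]; abel
  have hbdd := bddBelow_image_add_smul_USet hSg θstar (v k x) (2 * lam)
  -- `θ + λu = θ* + 2λ · (w + u)/2`, and `(w + u)/2 ∈ U_Σ` by convexity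
  have hsub : ((fun u => (θstar + lam • w + lam • u) ⬝ᵥ v k x) '' USet Sg) ⊆
      ((fun u => (θstar + (2 * lam) • u) ⬝ᵥ v k x) '' USet Sg) := by
    rintro _ ⟨u, hu, rfl⟩
    refine ⟨(2⁻¹ : ℝ) • w + (2⁻¹ : ℝ) • u,
      convex_USet hSg hw hu (by norm_num) (by norm_num) (by norm_num), ?_⟩
    dsimp only
    congr 1
    module
  refine ⟨csInf_le_csInf hbdd ⟨_, 0, zero_mem_USet, rfl⟩ hsub, ?_⟩
  refine csInf_le (hbdd.mono hsub) ⟨-w, neg_mem_USet hw, ?_⟩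
  dsimp only
  congr 1
  module

/-- if `θ − θ* ∈ λU_Σ` then for every `x` and `k`,
`min_{u ∈ U_Σ} g_k(x, θ* + 2λu) ≤ min_{u ∈ U_Σ} g_k(x, θ + λu) ≤ g_k(x, θ*)`. -/
theorem stmt0 {d m K : ℕ} (hd : 1 ≤ d) (hm : 1 ≤ m) (hK : 1 ≤ K)
    (θstar : Fin d → ℝ) (v : Fin K → (Fin m → ℝ) → (Fin d → ℝ))
    (lam : ℝ) (hlam : 0 ≤ lam) (θ : Fin d → ℝ)
    (Sg : Matrix (Fin d) (Fin d) ℝ) (hSg : Sg.PosDef)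
    (hθ : θ - θstar ∈ lam • USet Sg) :
    ∀ x : Fin m → ℝ, ∀ k : Fin K,
      sInf ((fun u => (θstar + (2 * lam) • u) ⬝ᵥ v k x) '' USet Sg) ≤
          sInf ((fun u => (θ + lam • u) ⬝ᵥ v k x) '' USet Sg) ∧
        sInf ((fun u => (θ + lam • u) ⬝ᵥ v k x) '' USet Sg) ≤ θstar ⬝ᵥ v k x :=
  stmt0_general θstar v lam θ Sg hSg hθ
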